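/- arXiv:1705.01434 — 2 statements merged into one kernel-verified Lean document; each statement's English description precedes it below -/
import Mathlib

section
/- Let m ≥ 1 be an integer, let d_1, …, d_m be nonnegative real numbers, and let p := #{j : d_j = 0}. Then there exists a constant C ≥ 1 such that for every real λ ≤ −1, C^{-1}(−λ)^p ≤ ∫_{E_λ} exp(∑_{j=1}^m d_j u_j) du ≤ C(−λ)^p, where E_λ := {u ∈ ℝ^m : λ ≤ u_j ≤ 0 for all j, and ∑_{j=1}^m u_j ≥ λ} and du denotes m-dimensional Lebesgue measure. -/
/-!
The cube `[λ/m, 0]^m` lies inside `E_λ`, which lies inside the cube `[λ, 0]^m`. On a cube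
`[a, 0]^m` the integral factors into the one-dimensional integrals `∫_a^0 e^{d_j t} dt`: each of
the `p` factors with `d_j = 0` equals `-a`, while for `d_j > 0` the factor is at most `1/d_j` and,
once `a ≤ -1/m`, at least its value at `a = -1/m`.
-/

open MeasureTheory Finset

open Set in
theorem MeasureTheory.setIntegral_univ_pi_prod {ι 𝕜 : Type*} [Fintype ι] [RCLike 𝕜] {E : ι → Type*}
    {mE : ∀ i, MeasurableSpace (E i)} {μ : (i : ι) → Measure (E i)} [∀ i, SigmaFinite (μ i)]
    (f : (i : ι) → E i → 𝕜) (s : (i : ι) → Set (E i)) :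
    ∫ x in univ.pi s, ∏ i, f i (x i) ∂(Measure.pi μ) = ∏ i, ∫ x in s i, f i x ∂(μ i) := by
  rw [Measure.restrict_pi_pi, integral_fintype_prod_eq_prod]

namespace Real

theorem setIntegral_Icc_exp_mul_le_inv {c : ℝ} (hc : 0 < c) (a : ℝ) :
    ∫ t in Set.Icc a 0, exp (c * t) ≤ c⁻¹ :=
  calc ∫ t in Set.Icc a 0, exp (c * t) ≤ ∫ t in Set.Iic 0, exp (c * t) :=
        setIntegral_mono_set (integrableOn_exp_mul_Iic hc 0)
          (.of_forall fun _ => (exp_pos _).le) (Set.Icc_subset_Iic_self.eventuallyLE)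
    _ = c⁻¹ := by rw [integral_exp_mul_Iic hc, mul_zero, exp_zero, one_div]

theorem setIntegral_Icc_exp_mul_antitone (c : ℝ) {a b : ℝ} (hab : a ≤ b) :
    ∫ t in Set.Icc b 0, exp (c * t) ≤ ∫ t in Set.Icc a 0, exp (c * t) :=
  setIntegral_mono_set (by fun_prop : Continuous fun t => exp (c * t)).integrableOn_Icc
    (.of_forall fun _ => (exp_pos _).le) (Set.Icc_subset_Icc_left hab).eventuallyLE

theorem setIntegral_Icc_exp_mul_pos (c : ℝ) {a : ℝ} (ha : a < 0) :
    0 < ∫ t in Set.Icc a 0, exp (c * t) := by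
  rw [integral_Icc_eq_integral_Ioc, ← intervalIntegral.integral_of_le ha.le]
  exact intervalIntegral.intervalIntegral_pos_of_pos_on
    ((by fun_prop : Continuous fun t => exp (c * t)).intervalIntegrable _ _)
    (fun _ _ => exp_pos _) ha

end Real

section TruncatedSimplex

variable {ι : Type*} [Fintype ι]

def truncatedSimplex (lam : ℝ) : Set (ι → ℝ) :=
  {u | (∀ j, lam ≤ u j ∧ u j ≤ 0) ∧ lam ≤ ∑ j, u j}

theorem truncatedSimplex_subset_univ_pi (lam : ℝ) :
    truncatedSimplex (ι := ι) lam ⊆ Set.univ.pi fun _ => Set.Icc lam 0 :=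
  fun _ hu j _ => hu.1 j

theorem univ_pi_subset_truncatedSimplex (hι : 1 ≤ Fintype.card ι) {lam : ℝ} (hlam : lam ≤ 0) :
    (Set.univ.pi fun _ => Set.Icc (lam / Fintype.card ι) 0) ⊆ truncatedSimplex (ι := ι) lam := by
  intro u hu
  have hu : ∀ j, lam / Fintype.card ι ≤ u j ∧ u j ≤ 0 := fun j => hu j (Set.mem_univ j)
  have hlam_le : lam ≤ lam / Fintype.card ι := by
    have := div_le_self (neg_nonneg.mpr hlam) (by exact_mod_cast hι : (1 : ℝ) ≤ Fintype.card ι)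
    rw [neg_div] at this
    linarith
  refine ⟨fun j => ⟨hlam_le.trans (hu j).1, (hu j).2⟩, ?_⟩
  calc lam = ∑ _j : ι, lam / Fintype.card ι := by
        rw [sum_const, card_univ, nsmul_eq_mul]
        field_simp
    _ ≤ ∑ j, u j := sum_le_sum fun j _ => (hu j).1

theorem setIntegral_univ_pi_Icc_exp_sum (d : ι → ℝ) {a : ℝ} (ha : a ≤ 0) :
    ∫ u in Set.univ.pi (fun _ => Set.Icc a 0), Real.exp (∑ j, d j * u j) =
      (-a) ^ (univ.filter fun j => d j = 0).card *
        ∏ j ∈ univ.filter (fun j => d j ≠ 0), ∫ t in Set.Icc a 0, Real.exp (d j * t) := by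
  simp_rw [Real.exp_sum]
  rw [volume_pi, setIntegral_univ_pi_prod (fun j t => Real.exp (d j * t)),
    ← prod_filter_mul_prod_filter_not univ (d · = 0)]
  congr 1
  rw [prod_congr rfl fun j hj => by rw [(mem_filter.mp hj).2], prod_const]
  simp [ha]

theorem setIntegral_truncatedSimplex_exp_sum_le {d : ι → ℝ} (hd : ∀ j, 0 ≤ d j) {lam : ℝ}
    (hlam : lam ≤ 0) :
    ∫ u in truncatedSimplex lam, Real.exp (∑ j, d j * u j) ≤
      (∏ j ∈ univ.filter (fun j => d j ≠ 0), (d j)⁻¹) *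
        (-lam) ^ (univ.filter fun j => d j = 0).card := by
  have hcont : Continuous fun u : ι → ℝ => Real.exp (∑ j, d j * u j) := by fun_prop
  have hint : IntegrableOn (fun u : ι → ℝ => Real.exp (∑ j, d j * u j))
      (Set.univ.pi fun _ => Set.Icc lam 0) :=
    hcont.continuousOn.integrableOn_compact (isCompact_univ_pi fun _ => isCompact_Icc)
  calc ∫ u in truncatedSimplex lam, Real.exp (∑ j, d j * u j)
      ≤ ∫ u in Set.univ.pi (fun _ => Set.Icc lam 0), Real.exp (∑ j, d j * u j) :=
        setIntegral_mono_set hint (.of_forall fun _ => (Real.exp_pos _).le)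
          (truncatedSimplex_subset_univ_pi lam).eventuallyLE
    _ ≤ _ := by
        rw [setIntegral_univ_pi_Icc_exp_sum d hlam, mul_comm]
        gcongr with j hj
        · exact pow_nonneg (neg_nonneg.mpr hlam) _
        · exact Real.setIntegral_Icc_exp_mul_le_inv
            ((hd j).lt_of_ne (mem_filter.mp hj).2.symm) lam

theorem le_setIntegral_truncatedSimplex_exp_sum (hι : 1 ≤ Fintype.card ι) (d : ι → ℝ) {lam : ℝ}
    (hlam : lam ≤ -1) :
    ((Fintype.card ι : ℝ) ^ (univ.filter fun j => d j = 0).card)⁻¹ *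
        (∏ j ∈ univ.filter (fun j => d j ≠ 0),
          ∫ t in Set.Icc (-(Fintype.card ι : ℝ)⁻¹) 0, Real.exp (d j * t)) *
        (-lam) ^ (univ.filter fun j => d j = 0).card ≤
      ∫ u in truncatedSimplex lam, Real.exp (∑ j, d j * u j) := by
  set n : ℝ := (Fintype.card ι : ℝ)
  have hn : 0 < n := by positivity
  have hlam_div : lam / n ≤ -n⁻¹ := by
    rw [div_le_iff₀ hn, neg_mul, inv_mul_cancel₀ hn.ne']
    exact hlam
  have hcont : Continuous fun u : ι → ℝ => Real.exp (∑ j, d j * u j) := by fun_prop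
  have hint : IntegrableOn (fun u : ι → ℝ => Real.exp (∑ j, d j * u j)) (truncatedSimplex lam) :=
    (hcont.continuousOn.integrableOn_compact (isCompact_univ_pi fun _ => isCompact_Icc)).mono_set
      (truncatedSimplex_subset_univ_pi lam)
  calc _ = (-(lam / n)) ^ (univ.filter fun j => d j = 0).card *
        ∏ j ∈ univ.filter (fun j => d j ≠ 0), ∫ t in Set.Icc (-n⁻¹) 0, Real.exp (d j * t) := by
        rw [← neg_div, div_pow]
        field_simp
    _ ≤ (-(lam / n)) ^ (univ.filter fun j => d j = 0).card *
        ∏ j ∈ univ.filter (fun j => d j ≠ 0), ∫ t in Set.Icc (lam / n) 0, Real.exp (d j * t) := by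
        refine mul_le_mul_of_nonneg_left (prod_le_prod (fun j _ => ?_) fun j _ => ?_) ?_
        · exact (Real.setIntegral_Icc_exp_mul_pos _ (neg_neg_of_pos (inv_pos.mpr hn))).le
        · exact Real.setIntegral_Icc_exp_mul_antitone _ hlam_div
        · exact pow_nonneg (by linarith [inv_pos.mpr hn]) _
    _ = ∫ u in Set.univ.pi (fun _ => Set.Icc (lam / n) 0), Real.exp (∑ j, d j * u j) :=
        (setIntegral_univ_pi_Icc_exp_sum d (by linarith [inv_pos.mpr hn])).symm
    _ ≤ ∫ u in truncatedSimplex lam, Real.exp (∑ j, d j * u j) :=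
        setIntegral_mono_set hint (.of_forall fun _ => (Real.exp_pos _).le)
          (univ_pi_subset_truncatedSimplex hι (by linarith)).eventuallyLE

end TruncatedSimplex

theorem exists_one_le_inv_mul_le_and_le_mul {α : Type*} {P : α → Prop} {x I : α → ℝ}
    {lo hi : ℝ} (hlo : 0 < lo) (hx : ∀ t, P t → 0 ≤ x t)
    (h : ∀ t, P t → lo * x t ≤ I t ∧ I t ≤ hi * x t) :
    ∃ C, 1 ≤ C ∧ ∀ t, P t → C⁻¹ * x t ≤ I t ∧ I t ≤ C * x t := by
  refine ⟨max 1 (max hi lo⁻¹), le_max_left _ _, fun t ht => ⟨?_, ?_⟩⟩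
  · have : (max 1 (max hi lo⁻¹))⁻¹ ≤ lo :=
      inv_le_of_inv_le₀ hlo ((le_max_right _ _).trans (le_max_right _ _))
    exact (mul_le_mul_of_nonneg_right this (hx t ht)).trans (h t ht).1
  · exact (h t ht).2.trans
      (mul_le_mul_of_nonneg_right ((le_max_left _ _).trans (le_max_right _ _)) (hx t ht))

/-- asymptotics of the exponential integral over the truncated simplex
`E_λ = {u ∈ ℝ^m : λ ≤ u_j ≤ 0 ∀ j, ∑ u_j ≥ λ}`, where `p` is the number of vanishing
exponents `d_j`. -/
theorem stmt_0 (m : ℕ) (hm : 1 ≤ m) (d : Fin m → ℝ) (hd : ∀ j, 0 ≤ d j)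
    (p : ℕ) (hp : p = (Finset.univ.filter fun j => d j = 0).card) :
    ∃ C : ℝ, 1 ≤ C ∧ ∀ lam : ℝ, lam ≤ -1 →
      C⁻¹ * (-lam) ^ p ≤
        (∫ u in {u : Fin m → ℝ | (∀ j, lam ≤ u j ∧ u j ≤ 0) ∧ lam ≤ ∑ j, u j},
          Real.exp (∑ j, d j * u j)) ∧
      (∫ u in {u : Fin m → ℝ | (∀ j, lam ≤ u j ∧ u j ≤ 0) ∧ lam ≤ ∑ j, u j},
          Real.exp (∑ j, d j * u j)) ≤ C * (-lam) ^ p := by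
  subst hp
  have hcard : 1 ≤ Fintype.card (Fin m) := by simpa using hm
  refine exists_one_le_inv_mul_le_and_le_mul (P := (· ≤ -1))
    (I := fun lam => ∫ u in truncatedSimplex lam, Real.exp (∑ j, d j * u j)) ?_
    (fun lam hlam => pow_nonneg (by linarith) _)
    (fun lam hlam => ⟨le_setIntegral_truncatedSimplex_exp_sum hcard d hlam,
      setIntegral_truncatedSimplex_exp_sum_le hd (by linarith)⟩)
  have hn : (0 : ℝ) < Fintype.card (Fin m) := by exact_mod_cast hcard
  exact mul_pos (by positivity) (prod_pos fun j _ =>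
    Real.setIntegral_Icc_exp_mul_pos _ (neg_neg_of_pos (inv_pos.mpr hn)))
end

section
/- Fix β > 0, an integer N ≥ 1, and C₀ ≥ 1. Let D* := {z ∈ ℂ : 0 < |z| ≤ 1} and let h : D* → (0,∞) be continuous with C₀^{-1}|z|^{−2(1−β)}(−log|z|)^{N−1} ≤ h(z) ≤ C₀|z|^{−2(1−β)}(−log|z|)^{N−1} for all 0 < |z| ≤ 1/2. Let d_h denote the induced path metric on D* (the infimum of ∫_0^1 √(h(γ(t)))|γ'(t)| dt over piecewise C¹ paths in D*). Then the d_h-diameter of the punctured δ-disk tends to zero as δ → 0: lim_{δ→0⁺} sup{ d_h(x,y) : 0 < |x| ≤ δ, 0 < |y| ≤ δ } = 0. -/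
/-!
Join `x` and `y` by the logarithmic spiral `γ(t) = exp((1 - t) log x + t log y)`, which stays in
the punctured `δ`-disk and satisfies `|γ'| = |γ| |log y - log x|`. Since `r ^ β (-log r) ^ K` is
bounded on `(0, 1]`, the hypothesis gives `h ≤ C |z| ^ (β - 2)`, so the `h`-length of `γ` is at most
`√C |log y - log x| ∫₀¹ |γ| ^ (β/2)`. Along `γ`, `|γ| ^ (β/2)` is the exponential of an affine
function, so `|log |y| - log |x|| ∫₀¹ |γ| ^ (β/2)` is `(2/β) ||y| ^ (β/2) - |x| ^ (β/2)|`, and the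
angular part of `log y - log x` is at most `2π`: the length is `O(δ ^ (β/2))`.
-/

open MeasureTheory

/-- The punctured closed unit disk `{z : 0 < |z| ≤ 1}`. -/
def Dstar : Set ℂ := {z : ℂ | 0 < ‖z‖ ∧ ‖z‖ ≤ 1}

/-- A path `γ : [0,1] → ℂ` is piecewise continuously differentiable: it is continuous on
`[0,1]` and continuously differentiable off a finite set of parameters. -/
def PiecewiseC1 (γ : ℝ → ℂ) : Prop :=
  ContinuousOn γ (Set.Icc 0 1) ∧
  ∃ T : Finset ℝ, ∀ t ∈ Set.Icc (0:ℝ) 1 \ (T : Set ℝ),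
    DifferentiableAt ℝ γ t ∧ ContinuousAt (deriv γ) t

/-- The `h`-length `L_h(γ) = ∫_0^1 √(h(γ(t))) |γ'(t)| dt` of a path with respect to the
conformal factor `h`. -/
noncomputable def lengthH (h : ℂ → ℝ) (γ : ℝ → ℂ) : ℝ :=
  ∫ t in (0:ℝ)..1, Real.sqrt (h (γ t)) * ‖deriv γ t‖

/-- The induced path (pseudo)distance `d_h` on the punctured disk: the infimum of the
`h`-lengths of piecewise `C¹` paths in `D*` joining the two points. -/
noncomputable def dH (h : ℂ → ℝ) (x y : ℂ) : ℝ :=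
  sInf {L : ℝ | ∃ γ : ℝ → ℂ, PiecewiseC1 γ ∧ (∀ t ∈ Set.Icc (0:ℝ) 1, γ t ∈ Dstar) ∧
    γ 0 = x ∧ γ 1 = y ∧ L = lengthH h γ}

open Real Filter Topology Set
open scoped Nat

lemma rpow_mul_neg_log_pow_le {β r : ℝ} (hβ : 0 < β) (hr0 : 0 < r) (hr1 : r ≤ 1) (K : ℕ) :
    r ^ β * (-log r) ^ K ≤ K ! / β ^ K := by
  set u := -(β * log r)
  have hu : 0 ≤ u := by nlinarith [log_nonpos hr0.le hr1]
  have hpow : u ^ K ≤ K ! * exp u := by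
    have := pow_div_factorial_le_exp u hu K
    rwa [div_le_iff₀ (by positivity), mul_comm] at this
  have hr : r ^ β = exp (-u) := by rw [rpow_def_of_pos hr0, neg_neg, mul_comm]
  have hlog : -log r = u / β := by simp only [u]; field_simp
  rw [hr, hlog, div_pow, mul_div_assoc']
  gcongr
  calc exp (-u) * u ^ K ≤ exp (-u) * (K ! * exp u) := by gcongr
    _ = K ! := by rw [mul_left_comm, ← exp_add, neg_add_cancel, exp_zero, mul_one]

lemma rpow_mul_neg_log_pow_le_mul_rpow {β r : ℝ} (hβ : 0 < β) (hr0 : 0 < r) (hr1 : r ≤ 1)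
    (K : ℕ) : r ^ (-(2 * (1 - β))) * (-log r) ^ K ≤ K ! / β ^ K * r ^ (β - 2) := by
  rw [show -(2 * (1 - β)) = β + (β - 2) by ring, rpow_add hr0, mul_right_comm]
  gcongr
  exact rpow_mul_neg_log_pow_le hβ hr0 hr1 K

lemma integral_exp_affine_le {p q E : ℝ} (h0 : exp p ≤ E) (h1 : exp (p + q) ≤ E) :
    ∫ t in (0 : ℝ)..1, exp (p + q * t) ≤ E := by
  have hE : 0 < E := (exp_pos p).trans_le h0
  calc ∫ t in (0 : ℝ)..1, exp (p + q * t) ≤ ∫ _ in (0 : ℝ)..1, E := by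
        refine intervalIntegral.integral_mono_on zero_le_one
          (Continuous.intervalIntegrable (by fun_prop) _ _)
          intervalIntegrable_const fun t ht => ?_
        rw [← le_log_iff_exp_le hE] at h0 h1 ⊢
        nlinarith [ht.1, ht.2]
    _ = E := by simp

lemma mul_integral_exp_affine (p q : ℝ) :
    q * ∫ t in (0 : ℝ)..1, exp (p + q * t) = exp (p + q) - exp p := by
  rw [← intervalIntegral.integral_const_mul,
    intervalIntegral.integral_eq_sub_of_hasDerivAt (f := fun t => exp (p + q * t))
      (fun t _ => by simpa [mul_comm] using (((hasDerivAt_id t).const_mul q).const_add p).exp)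
      (Continuous.intervalIntegrable (by fun_prop) _ _)]
  simp

lemma abs_mul_integral_exp_affine_le {p q E : ℝ} (h0 : exp p ≤ E) (h1 : exp (p + q) ≤ E) :
    |q| * ∫ t in (0 : ℝ)..1, exp (p + q * t) ≤ E := by
  have hI : 0 ≤ ∫ t in (0 : ℝ)..1, exp (p + q * t) :=
    intervalIntegral.integral_nonneg zero_le_one fun t _ => (exp_pos _).le
  rw [← abs_of_nonneg hI, ← abs_mul, mul_integral_exp_affine, abs_le]
  constructor <;> linarith [exp_pos p, exp_pos (p + q)]

lemma dH_le_lengthH (f : ℂ → ℝ) {γ : ℝ → ℂ} (hγ : PiecewiseC1 γ)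
    (hγD : ∀ t ∈ Icc (0 : ℝ) 1, γ t ∈ Dstar) : dH f (γ 0) (γ 1) ≤ lengthH f γ := by
  refine csInf_le ⟨0, ?_⟩ ⟨γ, hγ, hγD, rfl, rfl, rfl⟩
  rintro L ⟨γ', -, -, -, -, rfl⟩
  exact intervalIntegral.integral_nonneg zero_le_one fun t _ => by positivity

noncomputable def logSpiral (x y : ℂ) (t : ℝ) : ℂ :=
  Complex.exp (Complex.log x + t * (Complex.log y - Complex.log x))

section logSpiral

variable {x y : ℂ}

lemma logSpiral_zero (hx : x ≠ 0) : logSpiral x y 0 = x := by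
  simp [logSpiral, Complex.exp_log hx]

lemma logSpiral_one (hy : y ≠ 0) : logSpiral x y 1 = y := by
  simp [logSpiral, Complex.exp_log hy]

lemma hasDerivAt_logSpiral (t : ℝ) :
    HasDerivAt (logSpiral x y) (logSpiral x y t * (Complex.log y - Complex.log x)) t := by
  have hline : HasDerivAt (fun t : ℝ => Complex.log x + t * (Complex.log y - Complex.log x))
      (Complex.log y - Complex.log x) t := by
    simpa using ((hasDerivAt_id t).ofReal_comp.mul_const _).const_add (Complex.log x)
  exact hline.cexp

lemma deriv_logSpiral :
    deriv (logSpiral x y) = fun t => logSpiral x y t * (Complex.log y - Complex.log x) :=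
  funext fun t => (hasDerivAt_logSpiral t).deriv

lemma continuous_logSpiral : Continuous (logSpiral x y) := by
  unfold logSpiral
  fun_prop

lemma piecewiseC1_logSpiral : PiecewiseC1 (logSpiral x y) := by
  refine ⟨continuous_logSpiral.continuousOn, ∅, fun t _ =>
    ⟨(hasDerivAt_logSpiral t).differentiableAt, ?_⟩⟩
  rw [deriv_logSpiral]
  exact (continuous_logSpiral.mul continuous_const).continuousAt

lemma norm_logSpiral (t : ℝ) :
    ‖logSpiral x y t‖ = exp (log ‖x‖ + t * (log ‖y‖ - log ‖x‖)) := by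
  simp [logSpiral, Complex.norm_exp, Complex.log_re]

lemma norm_logSpiral_le {δ t : ℝ} (hx0 : 0 < ‖x‖) (hxδ : ‖x‖ ≤ δ) (hy0 : 0 < ‖y‖)
    (hyδ : ‖y‖ ≤ δ) (ht : t ∈ Icc (0 : ℝ) 1) : ‖logSpiral x y t‖ ≤ δ := by
  have ha := log_le_log hx0 hxδ
  have hb := log_le_log hy0 hyδ
  rw [norm_logSpiral, ← le_log_iff_exp_le (hx0.trans_le hxδ)]
  nlinarith [ht.1, ht.2]

lemma dH_le_lengthH_logSpiral (f : ℂ → ℝ) (hx0 : 0 < ‖x‖) (hx1 : ‖x‖ ≤ 1) (hy0 : 0 < ‖y‖)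
    (hy1 : ‖y‖ ≤ 1) : dH f x y ≤ lengthH f (logSpiral x y) := by
  have hD : ∀ t ∈ Icc (0 : ℝ) 1, logSpiral x y t ∈ Dstar := fun t ht =>
    ⟨by rw [norm_logSpiral]; exact exp_pos _, norm_logSpiral_le hx0 hx1 hy0 hy1 ht⟩
  simpa [logSpiral_zero (norm_pos_iff.1 hx0), logSpiral_one (norm_pos_iff.1 hy0)] using
    dH_le_lengthH f piecewiseC1_logSpiral hD

lemma norm_log_sub_log_le (x y : ℂ) :
    ‖Complex.log y - Complex.log x‖ ≤ |log ‖y‖ - log ‖x‖| + 2 * π := by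
  have him : |(Complex.log y - Complex.log x).im| ≤ 2 * π := by
    simp only [Complex.sub_im, Complex.log_im]
    linarith [abs_sub (Complex.arg y) (Complex.arg x), Complex.abs_arg_le_pi y,
      Complex.abs_arg_le_pi x]
  have hre : (Complex.log y - Complex.log x).re = log ‖y‖ - log ‖x‖ := by
    simp [Complex.log_re]
  have := Complex.norm_le_abs_re_add_abs_im (Complex.log y - Complex.log x)
  rw [hre] at this
  linarith

lemma sqrt_mul_norm_deriv_logSpiral_le {f : ℂ → ℝ} {β C δ : ℝ}
    (hf : ∀ z : ℂ, 0 < ‖z‖ → ‖z‖ ≤ δ → f z ≤ C * ‖z‖ ^ (β - 2))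
    (hx0 : 0 < ‖x‖) (hxδ : ‖x‖ ≤ δ) (hy0 : 0 < ‖y‖) (hyδ : ‖y‖ ≤ δ) {t : ℝ}
    (ht : t ∈ Icc (0 : ℝ) 1) :
    √(f (logSpiral x y t)) * ‖deriv (logSpiral x y) t‖ ≤
      √C * ‖Complex.log y - Complex.log x‖ *
        exp (β / 2 * log ‖x‖ + β / 2 * (log ‖y‖ - log ‖x‖) * t) := by
  set s := log ‖x‖ + t * (log ‖y‖ - log ‖x‖)
  have hγ : ‖logSpiral x y t‖ = exp s := norm_logSpiral t
  have hfγ : f (logSpiral x y t) ≤ C * exp ((β - 2) * s) := by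
    have := hf _ (hγ ▸ exp_pos s) (norm_logSpiral_le hx0 hxδ hy0 hyδ ht)
    rwa [hγ, rpow_def_of_pos (exp_pos s), log_exp, mul_comm s] at this
  have hsqrt : √(f (logSpiral x y t)) ≤ √C * exp ((β - 2) / 2 * s) := by
    calc √(f (logSpiral x y t)) ≤ √(C * exp ((β - 2) * s)) := sqrt_le_sqrt hfγ
      _ = √C * exp ((β - 2) / 2 * s) := by
        rw [sqrt_mul' _ (exp_pos _).le, ← exp_half]
        ring_nf
  calc √(f (logSpiral x y t)) * ‖deriv (logSpiral x y) t‖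
      ≤ √C * exp ((β - 2) / 2 * s) * (exp s * ‖Complex.log y - Complex.log x‖) := by
        rw [deriv_logSpiral, norm_mul, hγ]
        gcongr
    _ = √C * ‖Complex.log y - Complex.log x‖ * exp ((β - 2) / 2 * s + s) := by
        rw [exp_add ((β - 2) / 2 * s) s]; ring
    _ = _ := by
        rw [show (β - 2) / 2 * s + s = β / 2 * log ‖x‖ + β / 2 * (log ‖y‖ - log ‖x‖) * t by
          simp only [s]; ring]

lemma lengthH_logSpiral_le {f : ℂ → ℝ} {β C δ : ℝ} (hβ : 0 < β)
    (hf : ∀ z : ℂ, 0 < ‖z‖ → ‖z‖ ≤ δ → f z ≤ C * ‖z‖ ^ (β - 2))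
    (hx0 : 0 < ‖x‖) (hxδ : ‖x‖ ≤ δ) (hy0 : 0 < ‖y‖) (hyδ : ‖y‖ ≤ δ) :
    lengthH f (logSpiral x y) ≤ √C * (2 / β + 2 * π) * δ ^ (β / 2) := by
  set p := β / 2 * log ‖x‖
  set q := β / 2 * (log ‖y‖ - log ‖x‖)
  set I := ∫ t in (0 : ℝ)..1, exp (p + q * t)
  have hδ : 0 < δ := hx0.trans_le hxδ
  have hexp : ∀ r : ℝ, 0 < r → r ≤ δ → exp (β / 2 * log r) ≤ δ ^ (β / 2) := fun r hr hrδ => by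
    rw [mul_comm, ← rpow_def_of_pos hr]
    exact rpow_le_rpow hr.le hrδ (by positivity)
  have h0 : exp p ≤ δ ^ (β / 2) := hexp _ hx0 hxδ
  have h1 : exp (p + q) ≤ δ ^ (β / 2) := by
    simpa [p, q, ← mul_add] using hexp _ hy0 hyδ
  have hI : 0 ≤ I := intervalIntegral.integral_nonneg zero_le_one fun t _ => (exp_pos _).le
  have hw : ‖Complex.log y - Complex.log x‖ ≤ 2 / β * |q| + 2 * π := by
    have := norm_log_sub_log_le x y
    rwa [show |log ‖y‖ - log ‖x‖| = 2 / β * |q| by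
      rw [abs_mul, abs_of_pos (half_pos hβ)]; field_simp] at this
  calc lengthH f (logSpiral x y)
      ≤ ∫ t in (0 : ℝ)..1, √C * ‖Complex.log y - Complex.log x‖ * exp (p + q * t) := by
        rw [lengthH, intervalIntegral.integral_of_le zero_le_one,
          intervalIntegral.integral_of_le zero_le_one]
        refine setIntegral_mono_of_nonneg (fun t _ => by positivity)
          (fun t ht =>
            sqrt_mul_norm_deriv_logSpiral_le hf hx0 hxδ hy0 hyδ (Ioc_subset_Icc_self ht))
          (Continuous.integrableOn_Ioc (by fun_prop))
    _ = √C * (‖Complex.log y - Complex.log x‖ * I) := by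
        rw [intervalIntegral.integral_const_mul, mul_assoc]
    _ ≤ √C * ((2 / β * |q| + 2 * π) * I) := by gcongr
    _ = √C * (2 / β * (|q| * I) + 2 * π * I) := by ring
    _ ≤ √C * (2 / β * δ ^ (β / 2) + 2 * π * δ ^ (β / 2)) := by
        gcongr
        · exact abs_mul_integral_exp_affine_le h0 h1
        · exact integral_exp_affine_le h0 h1
    _ = √C * (2 / β + 2 * π) * δ ^ (β / 2) := by ring

end logSpiral

lemma eventually_mul_rpow_le {β : ℝ} (hβ : 0 < β) (c : ℝ) {ε : ℝ} (hε : 0 < ε) :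
    ∀ᶠ δ in 𝓝[>] 0, c * δ ^ β ≤ ε := by
  have : Tendsto (fun δ : ℝ => c * δ ^ β) (𝓝[>] 0) (𝓝 0) := by
    simpa [zero_rpow hβ.ne'] using
      (((continuous_rpow_const hβ.le).tendsto 0).const_mul c).mono_left nhdsWithin_le_nhds
  exact this.eventually (ge_mem_nhds hε)

theorem stmt_7_general (β : ℝ) (hβ : 0 < β) (N : ℕ) (C₀ : ℝ) (hC₀ : 1 ≤ C₀)
    (h : ℂ → ℝ)
    (hbound : ∀ z : ℂ, 0 < ‖z‖ → ‖z‖ ≤ 1/2 →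
      C₀⁻¹ * (‖z‖ ^ (-(2*(1-β))) * (-Real.log (‖z‖)) ^ (N-1)) ≤ h z ∧
      h z ≤ C₀ * (‖z‖ ^ (-(2*(1-β))) * (-Real.log (‖z‖)) ^ (N-1))) :
    ∀ ε : ℝ, 0 < ε → ∃ δ₀ : ℝ, 0 < δ₀ ∧ δ₀ ≤ 1 ∧
      ∀ x y : ℂ, 0 < ‖x‖ → ‖x‖ ≤ δ₀ →
        0 < ‖y‖ → ‖y‖ ≤ δ₀ → dH h x y ≤ ε := by
  intro ε hε
  set C := C₀ * ((N - 1)! / β ^ (N - 1))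
  have hpower : ∀ z : ℂ, 0 < ‖z‖ → ‖z‖ ≤ 1 / 2 → h z ≤ C * ‖z‖ ^ (β - 2) := fun z hz0 hz =>
    (hbound z hz0 hz).2.trans <| (mul_le_mul_of_nonneg_left
      (rpow_mul_neg_log_pow_le_mul_rpow hβ hz0 (hz.trans (by norm_num)) _)
      (by linarith)).trans_eq (mul_assoc _ _ _).symm
  obtain ⟨δ₀, hδε, hδ0, hδ⟩ :=
    ((eventually_mul_rpow_le (half_pos hβ) (√C * (2 / β + 2 * π)) hε).and
      (Ioo_mem_nhdsGT (by norm_num : (0 : ℝ) < 1 / 2))).exists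
  have hδ1 : δ₀ ≤ 1 := hδ.le.trans (by norm_num)
  refine ⟨δ₀, hδ0, hδ1, fun x y hx0 hxδ hy0 hyδ => ?_⟩
  calc dH h x y ≤ lengthH h (logSpiral x y) :=
        dH_le_lengthH_logSpiral h hx0 (hxδ.trans hδ1) hy0 (hyδ.trans hδ1)
    _ ≤ √C * (2 / β + 2 * π) * δ₀ ^ (β / 2) :=
        lengthH_logSpiral_le hβ (fun z hz0 hzδ => hpower z hz0 (hzδ.trans hδ.le))
          hx0 hxδ hy0 hyδ
    _ ≤ ε := hδε

/-- the `d_h`-diameter of the punctured `δ`-disk tends to zero as `δ → 0⁺`: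
for every `ε > 0` there is `δ₀ > 0` such that any two points of the punctured `δ₀`-disk
are at `d_h`-distance at most `ε`. -/
theorem stmt_7 (β : ℝ) (hβ : 0 < β) (N : ℕ) (hN : 1 ≤ N) (C₀ : ℝ) (hC₀ : 1 ≤ C₀)
    (h : ℂ → ℝ) (hcont : ContinuousOn h Dstar)
    (hpos : ∀ z ∈ Dstar, 0 < h z)
    (hbound : ∀ z : ℂ, 0 < ‖z‖ → ‖z‖ ≤ 1/2 →
      C₀⁻¹ * (‖z‖ ^ (-(2*(1-β))) * (-Real.log (‖z‖)) ^ (N-1)) ≤ h z ∧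
      h z ≤ C₀ * (‖z‖ ^ (-(2*(1-β))) * (-Real.log (‖z‖)) ^ (N-1))) :
    ∀ ε : ℝ, 0 < ε → ∃ δ₀ : ℝ, 0 < δ₀ ∧ δ₀ ≤ 1 ∧
      ∀ x y : ℂ, 0 < ‖x‖ → ‖x‖ ≤ δ₀ →
        0 < ‖y‖ → ‖y‖ ≤ δ₀ → dH h x y ≤ ε :=
  stmt_7_general β hβ N C₀ hC₀ h hbound
end
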